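/- If a class C of graphs has low tree-width colorings, then C has bounded expansion. -/

import Mathlib

/-!
Take the low tree-width colouring `c` for the parameter `2r + 2`, and let `N` be its number of
colours. Let `P` be a family of balls of radius `r` and complexity `1`, so that the balls are
disjoint. Every edge `ij` of `G/P` is realised by a path on at most `2r + 2` vertices, running
inside `B i` from its centre to a vertex adjacent to `B j`, and then inside `B j` to its centre.
Sort the edges of `G/P` by the set `I` of colours on this path. The edges with colour set `I` form
a minor of `G[c⁻¹ I]`, the branch sets being the unions of the half-paths in each ball, and every
component of `G[c⁻¹ I]` has tree-width at most `|I| - 1 ≤ 2r + 1`.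

In a subgraph of a `k`-tree every finite vertex set contains a vertex whose neighbours in it form
a clique of at most `k` vertices. Removing such a vertex from its branch set keeps the branch set
connected and the minor intact, unless the branch set was that single vertex; then the
corresponding vertex of the minor, which has at most `k` edges, is deleted. Hence such a minor has
at most `k` edges per vertex, and summing over the at most `2 ^ N` colour sets gives
`|E(G/P)| ≤ 2 ^ N (2r + 1) |P|`.
-/

open scoped Classical

universe u v

/-- A rooted forest given by its ancestor order: `le x y` means `x` is an ancestor of `y`
(or `x = y`); ancestors of any vertex form a chain. -/
structure RootedForest (V : Type u) where
  le : V → V → Prop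
  le_refl : ∀ x, le x x
  le_antisymm : ∀ x y, le x y → le y x → x = y
  le_trans : ∀ x y z, le x y → le y z → le x z
  ancestors_chain : ∀ x y z, le x z → le y z → le x y ∨ le y x

/-- The closure of a rooted forest: each vertex is joined to all its proper ancestors. -/
def RootedForest.clos {V : Type u} (F : RootedForest V) : SimpleGraph V where
  Adj x y := x ≠ y ∧ (F.le x y ∨ F.le y x)
  symm := by
    constructor
    rintro x y ⟨h1, h2⟩
    exact ⟨h1.symm, h2.symm⟩
  loopless := ⟨fun x h => h.1 rfl⟩

/-- The height of a rooted forest: maximum number of vertices on a root-to-vertex path. -/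
noncomputable def RootedForest.height {V : Type u} [Fintype V] (F : RootedForest V) : ℕ :=
  Finset.univ.sup fun x => (Finset.univ.filter fun y => F.le y x).card

/-- Tree-depth: minimum height of a rooted forest whose closure contains `G`. -/
noncomputable def treeDepth {V : Type u} [Fintype V] (G : SimpleGraph V) : ℕ :=
  sInf {n : ℕ | ∃ F : RootedForest V, G ≤ F.clos ∧ F.height ≤ n}

/-- `H` is a `k`-tree: there is a construction order in which every vertex is added
adjacent to a clique of size at most `k` among the earlier vertices. -/
def IsKTree {V : Type u} (k : ℕ) (H : SimpleGraph V) : Prop :=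
  ∃ r : V → V → Prop, IsStrictTotalOrder V r ∧
    ∀ x : V, H.IsClique {y | r y x ∧ H.Adj y x} ∧ {y | r y x ∧ H.Adj y x}.ncard ≤ k

/-- Tree-width: minimum `k` such that `G` is a subgraph of a `k`-tree. -/
noncomputable def treeWidth {V : Type u} [Fintype V] (G : SimpleGraph V) : ℕ :=
  sInf {k : ℕ | ∃ H : SimpleGraph V, G ≤ H ∧ IsKTree k H}

/-- A `p`-centered coloring: every connected subgraph either has a color appearing
exactly once, or receives at least `p` colors. -/
def IsCenteredColoring {V : Type u} {α : Type v} (p : ℕ) (G : SimpleGraph V)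
    (c : V → α) : Prop :=
  ∀ S : Set V, (G.induce S).Connected →
    (∃ x ∈ S, ∀ y ∈ S, c y = c x → y = x) ∨ p ≤ (c '' S).ncard

/-- A class of (finite) graphs. -/
def GraphClass : Type 1 := ∀ (V : Type) [Fintype V], SimpleGraph V → Prop

def HasLowTreeWidthColorings (C : GraphClass) : Prop :=
  ∀ p : ℕ, 1 ≤ p → ∃ N : ℕ, ∀ (V : Type) [Fintype V], ∀ G : SimpleGraph V, C V G →
    ∃ c : V → Fin N, ∀ I : Finset (Fin N), I.card ≤ p →
      ∀ K : (G.induce {v | c v ∈ I}).ConnectedComponent,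
        treeWidth ((G.induce {v | c v ∈ I}).induce K.supp) ≤ I.card - 1

def HasLowTreeDepthColorings (C : GraphClass) : Prop :=
  ∀ p : ℕ, 1 ≤ p → ∃ N : ℕ, ∀ (V : Type) [Fintype V], ∀ G : SimpleGraph V, C V G →
    ∃ c : V → Fin N, ∀ I : Finset (Fin N), I.card ≤ p →
      ∀ K : (G.induce {v | c v ∈ I}).ConnectedComponent,
        treeDepth ((G.induce {v | c v ∈ I}).induce K.supp) ≤ I.card

/-- `χ_p(G)`: minimum number of colors such that any `i < p` color classes induce a
subgraph of tree-depth at most `i`. -/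
noncomputable def chiP {V : Type u} [Fintype V] (p : ℕ) (G : SimpleGraph V) : ℕ :=
  sInf {N : ℕ | ∃ c : V → Fin N, ∀ I : Finset (Fin N), I.card < p →
    treeDepth (G.induce {v | c v ∈ I}) ≤ I.card}

/-- `H` is a minor of `G`: disjoint connected branch sets, one per vertex of `H`,
joined by edges of `G` as prescribed by the edges of `H`. -/
def IsMinorOf {W : Type v} {V : Type u} (H : SimpleGraph W) (G : SimpleGraph V) : Prop :=
  ∃ B : W → Set V, (∀ w, (G.induce (B w)).Connected) ∧
    (Pairwise fun w w' => Disjoint (B w) (B w')) ∧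
    ∀ w w', H.Adj w w' → ∃ u ∈ B w, ∃ x ∈ B w', G.Adj u x

/-- The Hadwiger number: largest `n` with `K_n` a minor of `G`. -/
noncomputable def hadwiger {V : Type u} [Fintype V] (G : SimpleGraph V) : ℕ :=
  sSup {n : ℕ | IsMinorOf (⊤ : SimpleGraph (Fin n)) G}

/-- The grad `∇(G)`: maximum of `|E(H)|/|V(H)|` over minors `H` of `G`. -/
noncomputable def gradMax {V : Type u} [Fintype V] (G : SimpleGraph V) : ℝ :=
  sSup {x : ℝ | ∃ (W : Type) (_ : Finite W) (H : SimpleGraph W),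
    IsMinorOf H G ∧ x = (H.edgeSet.ncard : ℝ) / (Nat.card W : ℝ)}

/-- The quotient of `G` by a family of balls. -/
def quotientGraph {V : Type u} (G : SimpleGraph V) {p : ℕ} (B : Fin p → Set V) :
    SimpleGraph (Fin p) where
  Adj i j := i ≠ j ∧ ((B i ∩ B j).Nonempty ∨ ∃ u ∈ B i, ∃ x ∈ B j, G.Adj u x)
  symm := by
    constructor
    rintro i j ⟨hij, h⟩
    refine ⟨hij.symm, ?_⟩
    rcases h with h | ⟨u, hu, x, hx, huv⟩
    · exact Or.inl (by rwa [Set.inter_comm])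
    · exact Or.inr ⟨x, hx, u, hu, huv.symm⟩
  loopless := ⟨fun i h => h.1 rfl⟩

/-- A family of balls of radius at most `r` and complexity at most `c`. -/
def IsBallFamily {V : Type u} (G : SimpleGraph V) (r c : ℕ) {p : ℕ}
    (B : Fin p → Set V) : Prop :=
  (∀ i, (G.induce (B i)).Connected ∧
    ∃ x : B i, ∀ y : B i, (G.induce (B i)).dist x y ≤ r) ∧
  ∀ v : V, ({i | v ∈ B i} : Set (Fin p)).ncard ≤ c

/-- The grad `∇^c_r(G)` of `G` with rank `r` and complexity `c`. -/
noncomputable def gradCR {V : Type u} [Fintype V] (c r : ℕ) (G : SimpleGraph V) : ℝ :=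
  sSup {x : ℝ | ∃ (p : ℕ) (B : Fin p → Set V), IsBallFamily G r c B ∧
    x = ((quotientGraph G B).edgeSet.ncard : ℝ) / (p : ℝ)}

/-- The grad `∇_r(G)` of `G` with rank `r`. -/
noncomputable def gradR {V : Type u} [Fintype V] (r : ℕ) (G : SimpleGraph V) : ℝ :=
  gradCR 1 r G

def HasBoundedExpansion (C : GraphClass) : Prop :=
  ∃ f : ℕ → ℝ, ∀ (V : Type) [Fintype V], ∀ G : SimpleGraph V, C V G →
    ∀ r : ℕ, gradR r G ≤ f r

/-- The lexicographic product of two graphs. -/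
def lexProd {V : Type u} {W : Type v} (G : SimpleGraph V) (H : SimpleGraph W) :
    SimpleGraph (V × W) where
  Adj a b := G.Adj a.1 b.1 ∨ (a.1 = b.1 ∧ H.Adj a.2 b.2)
  symm := by
    constructor
    rintro a b (h | ⟨h1, h2⟩)
    · exact Or.inl h.symm
    · exact Or.inr ⟨h1.symm, h2.symm⟩
  loopless := by
    constructor
    rintro a (h | ⟨h1, h2⟩)
    · exact G.loopless.irrefl a.1 h
    · exact H.loopless.irrefl a.2 h2

/-- A loopless directed graph with at most one arc in each direction between two vertices. -/
structure Digr (V : Type u) where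
  Adj : V → V → Prop
  irrefl : ∀ x, ¬ Adj x x

/-- The underlying simple graph of a digraph. -/
def Digr.toSimple {V : Type u} (D : Digr V) : SimpleGraph V where
  Adj x y := D.Adj x y ∨ D.Adj y x
  symm := ⟨fun x y h => h.symm⟩
  loopless := ⟨fun x h => h.elim (D.irrefl x) (D.irrefl x)⟩

/-- Maximum indegree of a set of arcs (a binary relation). -/
noncomputable def inDegMax {V : Type u} [Fintype V] (R : V → V → Prop) : ℕ :=
  Finset.univ.sup fun y => (Finset.univ.filter fun x => R x y).card

def listArcs {V : Type u} (l : List V) : List (V × V) := l.zip l.tail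

def internalVerts {V : Type u} (l : List V) : List V := l.tail.dropLast

/-- `l` is (the vertex list of) a directed path in `D`. -/
def IsDiPath {V : Type u} (D : Digr V) (l : List V) : Prop :=
  l ≠ [] ∧ l.Nodup ∧ l.Chain' D.Adj

/-- `l` is a directed path in `D` from `x` to `z`. -/
def DiPathBetween {V : Type u} (D : Digr V) (l : List V) (x z : V) : Prop :=
  IsDiPath D l ∧ l.head? = some x ∧ l.getLast? = some z

/-- No internal vertex or arc of one path belongs to the other. -/
def SeparatedPair {V : Type u} (l1 l2 : List V) : Prop :=
  (∀ v ∈ internalVerts l1, v ∉ l2) ∧ (∀ v ∈ internalVerts l2, v ∉ l1) ∧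
  ∀ e ∈ listArcs l1, e ∉ listArcs l2

/-- `y` is `(a,b)`-reachable from `x` in `D`. -/
def ABReachable {V : Type u} (D : Digr V) (a b : ℕ) (x y : V) : Prop :=
  x ≠ y ∧ ∃ (z : V) (l1 l2 : List V),
    DiPathBetween D l1 x z ∧ DiPathBetween D l2 y z ∧
    l1.length ≤ a + 1 ∧ l2.length ≤ b + 1 ∧ SeparatedPair l1 l2

/-- `L` is an `(a,b)`-augmentation of `D`. -/
def IsAugmentation {V : Type u} (D : Digr V) (a b : ℕ) (L : V → V → Prop) : Prop :=
  ∀ x y, ABReachable D a b x y → L x y ∨ L y x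

/-- `H` is a `1`-transitive fraternal augmentation of `D`. -/
def IsOneTFA {V : Type u} (D H : Digr V) : Prop :=
  (∀ x y, D.Adj x y → H.Adj x y) ∧
  (∀ x y z, x ≠ y → D.Adj x z → D.Adj z y → H.Adj x y) ∧
  (∀ x y z, x ≠ y → D.Adj x z → D.Adj y z → H.Adj x y ∨ H.Adj y x)

/-- `Gs` (indexed from `1`) is a transitive fraternal augmentation of `D`. -/
def IsTFASeq {V : Type u} (D : Digr V) (Gs : ℕ → Digr V) : Prop :=
  Gs 1 = D ∧ ∀ i, 1 ≤ i → IsOneTFA (Gs i) (Gs (i + 1))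

/-- `D` is an orientation of the graph `G`. -/
def IsOrientationOf {V : Type u} (D : Digr V) (G : SimpleGraph V) : Prop :=
  (∀ x y, D.Adj x y → ¬ D.Adj y x) ∧ D.toSimple = G

/-- An acyclically oriented clique of size `p` in a digraph. -/
def AcyclicOrientedClique {V : Type u} (H : Digr V) (S : Set V) (p : ℕ) : Prop :=
  S.ncard = p ∧ (∀ x ∈ S, ∀ y ∈ S, x ≠ y → H.Adj x y ∨ H.Adj y x) ∧
  ∀ x : V, ¬ Relation.TransGen (fun a b => a ∈ S ∧ b ∈ S ∧ H.Adj a b) x x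

theorem Set.nonempty_sdiff_singleton_iff {α : Type*} {s : Set α} {a : α} (hs : s ≠ {a}) :
    (s \ {a}).Nonempty ↔ s.Nonempty := by
  refine ⟨fun h => h.mono Set.sdiff_subset, fun hne => ?_⟩
  by_contra h
  exact hs (Set.eq_singleton_iff_nonempty_unique_mem.2
    ⟨hne, fun x hx => by_contra fun hxa => h ⟨x, hx, hxa⟩⟩)

namespace SimpleGraph

variable {V W ι : Type*}

def HasSimplicialElimination (K : SimpleGraph V) (k : ℕ) : Prop :=
  ∀ T : Finset V, T.Nonempty → ∃ w ∈ T,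
    K.IsClique {y | y ∈ T ∧ K.Adj y w} ∧ {y | y ∈ T ∧ K.Adj y w}.ncard ≤ k

theorem _root_.IsKTree.hasSimplicialElimination [Finite V] {k : ℕ} {H : SimpleGraph V}
    (hH : IsKTree k H) : H.HasSimplicialElimination k := by
  obtain ⟨r, hr, hearlier⟩ := hH
  let := linearOrderOfSTO r
  intro T hT
  set w := T.max' hT
  have hsub : {y | y ∈ T ∧ H.Adj y w} ⊆ {y | r y w ∧ H.Adj y w} := fun y hy =>
    ⟨lt_of_le_of_ne (T.le_max' y hy.1) hy.2.ne, hy.2⟩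
  exact ⟨w, T.max'_mem hT, (hearlier w).1.subset hsub,
    (Set.ncard_le_ncard hsub (Set.toFinite _)).trans (hearlier w).2⟩

theorem HasSimplicialElimination.map {H : SimpleGraph W} {k : ℕ}
    (hH : H.HasSimplicialElimination k) (f : W ↪ V) : (H.map f).HasSimplicialElimination k := by
  intro T hT
  by_cases hT' : (T.preimage f f.injective.injOn).Nonempty
  · obtain ⟨w, hw, hclique, hcard⟩ := hH _ hT'
    have heq : {y | y ∈ T ∧ (H.map f).Adj y (f w)} =
        f '' {y | y ∈ T.preimage f f.injective.injOn ∧ H.Adj y w} := by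
      ext y
      simp only [Set.mem_ofPred_eq, map_adj, Set.mem_image, Finset.mem_preimage,
        EmbeddingLike.apply_eq_iff_eq]
      grind
    refine ⟨f w, by simpa using hw, ?_, ?_⟩
    · rw [heq]
      exact hclique.map
    · rwa [heq, Set.ncard_image_of_injective _ f.injective]
  · obtain ⟨t, ht⟩ := hT
    have hisolated : {y | y ∈ T ∧ (H.map f).Adj y t} = ∅ := by
      refine Set.eq_empty_of_forall_notMem fun y ⟨_, hyt⟩ => hT' ?_
      obtain ⟨_, w, -, -, rfl⟩ := (map_adj f H y t).1 hyt
      exact ⟨w, by simpa using ht⟩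
    refine ⟨t, ht, ?_⟩
    rw [hisolated, Set.ncard_empty]
    exact ⟨isClique_empty, k.zero_le⟩

theorem HasSimplicialElimination.iSup {K : ι → SimpleGraph V} {k : ℕ}
    (hK : ∀ i, (K i).HasSimplicialElimination k)
    (hdisj : Pairwise fun i j => Disjoint (K i).support (K j).support) :
    (⨆ i, K i).HasSimplicialElimination k := by
  intro T hT
  by_cases hmeet : ∃ i, (T.filter (· ∈ (K i).support)).Nonempty
  · obtain ⟨i, hi⟩ := hmeet
    obtain ⟨w, hw, hclique, hcard⟩ := hK i _ hi
    have hwi : w ∈ (K i).support := (Finset.mem_filter.1 hw).2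
    have heq : {y | y ∈ T ∧ (⨆ i, K i).Adj y w} =
        {y | y ∈ T.filter (· ∈ (K i).support) ∧ (K i).Adj y w} := by
      ext y
      simp only [Set.mem_ofPred_eq, Finset.mem_filter, iSup_adj]
      constructor
      · rintro ⟨hyT, j, hyw⟩
        obtain rfl : j = i := by
          by_contra hji
          exact Set.disjoint_left.1 (hdisj hji) ⟨y, hyw.symm⟩ hwi
        exact ⟨⟨hyT, w, hyw⟩, hyw⟩
      · rintro ⟨⟨hyT, -⟩, hyw⟩
        exact ⟨hyT, i, hyw⟩
    refine ⟨w, (Finset.mem_filter.1 hw).1, ?_, ?_⟩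
    · rw [heq]
      exact hclique.mono (le_iSup K i)
    · rwa [heq]
  · push Not at hmeet
    obtain ⟨t, ht⟩ := hT
    have hisolated : {y | y ∈ T ∧ (⨆ i, K i).Adj y t} = ∅ := by
      refine Set.eq_empty_of_forall_notMem fun y ⟨_, hyt⟩ => ?_
      obtain ⟨i, hyt⟩ := iSup_adj.1 hyt
      exact Finset.eq_empty_iff_forall_notMem.1 (hmeet i) t (Finset.mem_filter.2 ⟨ht, y, hyt.symm⟩)
    refine ⟨t, ht, ?_⟩
    rw [hisolated, Set.ncard_empty]
    exact ⟨isClique_empty, k.zero_le⟩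

theorem _root_.IsKTree.mono {k l : ℕ} {H : SimpleGraph V} (hH : IsKTree k H) (hkl : k ≤ l) :
    IsKTree l H :=
  let ⟨r, hr, hearlier⟩ := hH
  ⟨r, hr, fun x => ⟨(hearlier x).1, (hearlier x).2.trans hkl⟩⟩

theorem exists_isKTree_of_treeWidth_le [Fintype V] {X : SimpleGraph V} {k : ℕ}
    (hX : treeWidth X ≤ k) : ∃ H : SimpleGraph V, X ≤ H ∧ IsKTree k H := by
  have hcomplete : IsKTree (Fintype.card V) (⊤ : SimpleGraph V) := ⟨WellOrderingRel, inferInstance,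
    fun _ => ⟨fun _ _ _ _ hne => hne, (Set.ncard_le_card _).trans Nat.card_eq_fintype_card.le⟩⟩
  obtain ⟨H, hXH, hH⟩ := Nat.sInf_mem (s := {k | ∃ H : SimpleGraph V, X ≤ H ∧ IsKTree k H})
    ⟨_, ⊤, le_top, hcomplete⟩
  exact ⟨H, hXH, hH.mono hX⟩

theorem exists_hasSimplicialElimination_of_forall_isKTree [Finite V] {G : SimpleGraph V}
    {U : Set V} {k : ℕ}
    (hU : ∀ κ : (G.induce U).ConnectedComponent,
      ∃ H : SimpleGraph κ.supp, (G.induce U).induce κ.supp ≤ H ∧ IsKTree k H) :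
    ∃ K : SimpleGraph V, K.HasSimplicialElimination k ∧
      ∀ a ∈ U, ∀ b ∈ U, G.Adj a b → K.Adj a b := by
  choose H hXH hH using hU
  let φ (κ : (G.induce U).ConnectedComponent) : κ.supp ↪ V :=
    (Function.Embedding.subtype _).trans (Function.Embedding.subtype _)
  refine ⟨⨆ κ, (H κ).map (φ κ),
    .iSup (fun κ => (hH κ).hasSimplicialElimination.map (φ κ)) ?_, ?_⟩
  · intro κ κ' hκ
    rw [support_map, support_map, Set.disjoint_left]
    rintro _ ⟨a, -, rfl⟩ ⟨b, -, hba⟩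
    have hab : (b : U) = a := Subtype.ext hba
    exact hκ (a.2.symm.trans (hab ▸ b.2))
  · intro a ha b hb hab
    let κ := (G.induce U).connectedComponentMk ⟨a, ha⟩
    have hab' : (G.induce U).Adj ⟨a, ha⟩ ⟨b, hb⟩ := hab
    have hbκ : ⟨b, hb⟩ ∈ κ.supp := ConnectedComponent.eq.2 hab'.reachable.symm
    exact iSup_adj.2 ⟨κ, (map_adj _ _ _ _).2 ⟨⟨_, rfl⟩, ⟨_, hbκ⟩, hXH κ hab, rfl, rfl⟩⟩

theorem Preconnected.induce_diff_singleton {K : SimpleGraph V} {A : Set V} {w : V}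
    (hA : (K.induce A).Preconnected) (hw : K.IsClique {y | y ∈ A ∧ K.Adj y w}) :
    (K.induce (A \ {w})).Preconnected := by
  rintro ⟨a, ha⟩ ⟨b, hb⟩
  -- Send `w` to one of its neighbours `z` (if it has any): adjacent vertices go to adjacent or
  -- equal ones, because the neighbours of `w` form a clique.
  obtain ⟨z, hz, hzw⟩ : ∃ z ∈ A \ {w}, ∀ y ∈ A \ {w}, K.Adj y w → K.Adj z w := by
    by_cases h : ∃ z ∈ A \ {w}, K.Adj z w
    · obtain ⟨z, hz, hzw⟩ := h
      exact ⟨z, hz, fun _ _ _ => hzw⟩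
    · push Not at h
      exact ⟨a, ha, fun y hy hyw => absurd hyw (h y hy)⟩
  let f : A → ↥(A \ {w}) := fun x => if hx : x.1 = w then ⟨z, hz⟩ else ⟨x.1, x.2, hx⟩
  have hz_reach : ∀ y : ↥(A \ {w}), K.Adj y w → (K.induce (A \ {w})).Reachable ⟨z, hz⟩ y := by
    intro y hyw
    by_cases hzy : z = y
    · rw [show (⟨z, hz⟩ : ↥(A \ {w})) = y from Subtype.ext hzy]
    · exact Adj.reachable (hw ⟨hz.1, hzw y y.2 hyw⟩ ⟨y.2.1, hyw⟩ hzy)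
  have hf : ∀ x y : A, (K.induce A).Adj x y → (K.induce (A \ {w})).Reachable (f x) (f y) := by
    intro x y hxy
    by_cases hx : x.1 = w <;> by_cases hy : y.1 = w
    · exact absurd (hx.trans hy.symm) (K.ne_of_adj hxy)
    · simp only [f, hx, hy, dite_true, dite_false]
      exact hz_reach ⟨y, y.2, hy⟩ (hx ▸ hxy.symm)
    · simp only [f, hx, hy, dite_true, dite_false]
      exact (hz_reach ⟨x, x.2, hx⟩ (hy ▸ hxy)).symm
    · simp only [f, hx, hy, dite_false]
      exact Adj.reachable hxy
  simp only [reachable_iff_reflTransGen] at hf ⊢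
  have hab := (reachable_iff_reflTransGen _ _).1 (hA ⟨a, ha.1⟩ ⟨b, hb.1⟩)
  have hfab := Relation.ReflTransGen.lift' f hf _ _ hab
  have haw : a ≠ w := ha.2
  have hbw : b ≠ w := hb.2
  simpa only [Function.onFun, f, haw, hbw, dite_false] using hfab

theorem preconnected_induce_iUnion {G : SimpleGraph V} {s : ι → Set V} {v : V}
    (hs : ∀ i, (G.induce (s i)).Connected) (hv : ∀ i, v ∈ s i) :
    (G.induce (⋃ i, s i)).Preconnected := by
  rcases isEmpty_or_nonempty ι with hι | hι
  · rw [Set.iUnion_of_empty]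
    exact fun u => u.2.elim
  · rw [← Set.sUnion_range]
    refine (induce_sUnion_connected_of_pairwise_not_disjoint (Set.range_nonempty s) ?_ ?_)
      |>.preconnected
    · rintro _ _ ⟨i, rfl⟩ ⟨j, rfl⟩
      exact ⟨v, hv i, hv j⟩
    · rintro _ ⟨i, rfl⟩
      exact hs i

theorem exists_connected_induce_of_reachable {G : SimpleGraph V} {A : Set V} {x y : A}
    (h : (G.induce A).Reachable x y) :
    ∃ s ⊆ A, x.1 ∈ s ∧ y.1 ∈ s ∧ (G.induce s).Connected ∧
      s.ncard ≤ (G.induce A).dist x y + 1 := by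
  obtain ⟨p, hp⟩ := h.exists_walk_length_eq_dist
  let q := p.map (Embedding.induce A).toHom
  refine ⟨{v | v ∈ q.support}, ?_, q.start_mem_support, q.end_mem_support,
    q.connected_induce_support, ?_⟩
  · intro v hv
    rw [Set.mem_ofPred_eq, Walk.support_map, List.mem_map] at hv
    obtain ⟨a, -, rfl⟩ := hv
    exact a.2
  · rw [← List.coe_toFinset, Set.ncard_coe_finset, ← hp]
    calc q.support.toFinset.card ≤ q.support.length := List.toFinset_card_le _
      _ = p.length + 1 := by rw [Walk.length_support, Walk.length_map]

theorem ncard_edgeSet_le_of_deleteIncidenceSet [Fintype ι] {M : SimpleGraph ι} {A : Set ι}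
    {j : ι} {k : ℕ} (hj : j ∈ A) (hdeg : M.degree j ≤ k)
    (hrest : (M.deleteIncidenceSet j).edgeSet.ncard ≤ k * (A \ {j}).ncard) :
    M.edgeSet.ncard ≤ k * A.ncard := by
  have hdelete := card_edgeFinset_deleteIncidenceSet M j
  obtain ⟨n, hn⟩ := Nat.exists_eq_add_one.2 ((Set.ncard_pos (Set.toFinite _)).2 ⟨j, hj⟩)
  rw [Set.ncard_sdiff_singleton_of_mem hj, hn, add_tsub_cancel_right, ← coe_edgeFinset,
    Set.ncard_coe_finset] at hrest
  rw [← coe_edgeFinset, Set.ncard_coe_finset, hn]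
  calc M.edgeFinset.card ≤ (M.deleteIncidenceSet j).edgeFinset.card + M.degree j := by omega
    _ ≤ k * n + k := add_le_add hrest hdeg
    _ = k * (n + 1) := by ring

/-- A model of `M` as a minor of `K`, in which vertices of `M` without edges may have empty
branch sets. -/
structure IsMinorModel (K : SimpleGraph V) (M : SimpleGraph ι) (D : ι → Set V) : Prop where
  disjoint : Pairwise fun i j => Disjoint (D i) (D j)
  preconnected : ∀ i, (K.induce (D i)).Preconnected
  adj : ∀ i j, M.Adj i j → ∃ u ∈ D i, ∃ v ∈ D j, K.Adj u v

namespace IsMinorModel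

variable {K : SimpleGraph V} {M : SimpleGraph ι} {D : ι → Set V}

theorem sdiff_singleton (hD : IsMinorModel K M D) {w : V}
    (hw : K.IsClique {y | (∃ i, y ∈ D i) ∧ K.Adj y w}) {M' : SimpleGraph ι} (hM' : M' ≤ M)
    (hsingle : ∀ i i', M'.Adj i i' → D i ≠ {w}) :
    IsMinorModel K M' fun i => D i \ {w} := by
  have hN : ∀ i, ∀ y ∈ D i, K.Adj y w → y ∈ {y | (∃ i, y ∈ D i) ∧ K.Adj y w} :=
    fun i y hy hyw => ⟨⟨i, hy⟩, hyw⟩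
  -- An edge of `K` at `w` leaving the branch set of `w` can be moved to a neighbour of `w` there.
  have hrepl : ∀ i i', M'.Adj i i' → ∀ u ∈ D i, ∀ v ∈ D i', K.Adj u v →
      ∃ u' ∈ D i \ {w}, K.Adj u' v := by
    intro i i' hii' u hu v hv huv
    by_cases huw : u = w
    · subst huw
      obtain ⟨z, hz, hzu⟩ := (Set.nonempty_sdiff_singleton_iff (hsingle i i' hii')).2 ⟨u, hu⟩
      obtain ⟨z₀, hz₀, huz₀⟩ : ∃ z₀ ∈ D i, K.Adj u z₀ := by
        obtain ⟨p⟩ := hD.preconnected i ⟨u, hu⟩ ⟨z, hz⟩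
        cases p with
        | nil => exact (hzu rfl).elim
        | cons h _ => exact ⟨_, Subtype.prop _, h⟩
      have hz₀v : z₀ ≠ v := fun h =>
        Set.disjoint_left.1 (hD.disjoint (M'.ne_of_adj hii')) hz₀ (h ▸ hv)
      exact ⟨z₀, ⟨hz₀, (K.ne_of_adj huz₀).symm⟩,
        hw (hN _ _ hz₀ huz₀.symm) (hN _ _ hv huv.symm) hz₀v⟩
    · exact ⟨u, ⟨hu, huw⟩, huv⟩
  refine ⟨fun i i' h => (hD.disjoint h).mono Set.sdiff_subset Set.sdiff_subset,
    fun i => (hD.preconnected i).induce_diff_singleton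
      (hw.subset fun y hy => hN i y hy.1 hy.2), fun i i' hM => ?_⟩
  obtain ⟨u, hu, v, hv, huv⟩ := hD.adj i i' (hM' hM)
  obtain ⟨v', hv', hv'u⟩ := hrepl i' i hM.symm v hv u hu huv.symm
  obtain ⟨u', hu', hu'v'⟩ := hrepl i i' hM u hu v' hv'.1 hv'u.symm
  exact ⟨u', hu', v', hv', hu'v'⟩

theorem degree_le [Fintype ι] [DecidableRel M.Adj] (hD : IsMinorModel K M D) {j : ι} {w : V}
    (hDj : D j = {w}) (S : Finset V) (hS : ∀ i, D i ⊆ S) :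
    M.degree j ≤ {y | y ∈ S ∧ K.Adj y w}.ncard := by
  have hport : ∀ i ∈ (M.neighborFinset j : Set ι), ∃ u ∈ D i, K.Adj u w := by
    intro i hi
    obtain ⟨u, hu, v, hv, huv⟩ := hD.adj i j ((mem_neighborFinset _ _ _).1 hi).symm
    rw [hDj, Set.mem_singleton_iff] at hv
    exact ⟨u, hu, hv ▸ huv⟩
  have : Nonempty V := ⟨w⟩
  choose! f hfD hfw using hport
  rw [← card_neighborFinset_eq_degree, ← Set.ncard_coe_finset]
  refine Set.ncard_le_ncard_of_injOn f (fun i hi => ⟨hS i (hfD i hi), hfw i hi⟩) ?_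
    (S.finite_toSet.subset fun _ hy => hy.1)
  intro i hi i' hi' hii'
  by_contra hne
  exact Set.disjoint_left.1 (hD.disjoint hne) (hfD i hi) (hii' ▸ hfD i' hi')

theorem ncard_edgeSet_le [Fintype ι] {k : ℕ} (hK : K.HasSimplicialElimination k)
    (hD : IsMinorModel K M D) (S : Finset V) (hS : ∀ i, D i ⊆ S) :
    M.edgeSet.ncard ≤ k * {i | (D i).Nonempty}.ncard := by
  induction S using Finset.strongInduction generalizing M D with
  | H S ih =>
  rcases S.eq_empty_or_nonempty with rfl | hSne
  · have hM : M = ⊥ := by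
      ext i j
      refine iff_of_false (fun hij => ?_) id
      obtain ⟨u, hu, -⟩ := hD.adj i j hij
      simpa using hS i hu
    simp [hM]
  obtain ⟨w, hwS, hclique, hcard⟩ := hK S hSne
  have hclique' : K.IsClique {y | (∃ i, y ∈ D i) ∧ K.Adj y w} :=
    hclique.subset fun y (hy : (∃ i, y ∈ D i) ∧ K.Adj y w) =>
      hy.1.elim fun i hi => (⟨hS i hi, hy.2⟩ : y ∈ S ∧ K.Adj y w)
  have ih' : ∀ M' ≤ M, (∀ i i', M'.Adj i i' → D i ≠ {w}) →
      M'.edgeSet.ncard ≤ k * {i | (D i \ {w}).Nonempty}.ncard := fun M' hM' hsingle =>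
    ih _ (S.erase_ssubset hwS) (hD.sdiff_singleton hclique' hM' hsingle)
      fun i x hx => Finset.mem_coe.2 (Finset.mem_erase.2 ⟨hx.2, hS i hx.1⟩)
  by_cases hsingle : ∃ j, D j = {w}
  · obtain ⟨j, hj⟩ := hsingle
    have hne : ∀ i, i ≠ j → D i ≠ {w} := fun i hij hi =>
      Set.disjoint_left.1 (hD.disjoint hij) (hi ▸ Set.mem_singleton w) (hj ▸ Set.mem_singleton w)
    have hnonempty : {i | (D i \ {w}).Nonempty} = {i | (D i).Nonempty} \ {j} := by
      ext i
      by_cases hij : i = j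
      · subst hij
        simp [hj]
      · simp [hij, Set.nonempty_sdiff_singleton_iff (hne i hij)]
    refine ncard_edgeSet_le_of_deleteIncidenceSet (j := j) (by simp [hj])
      ((hD.degree_le hj S hS).trans hcard) ?_
    rw [← hnonempty]
    exact ih' _ (M.deleteIncidenceSet_le j) fun i i' h => hne i (deleteIncidenceSet_adj.1 h).2.1
  · push Not at hsingle
    simpa [Set.nonempty_sdiff_singleton_iff (hsingle _)] using
      ih' M le_rfl fun i _ _ => hsingle i

end IsMinorModel

theorem isMinorModel_iUnion {G K : SimpleGraph V} {U : Set V}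
    (hGK : ∀ a ∈ U, ∀ b ∈ U, G.Adj a b → K.Adj a b) {M : SimpleGraph ι} {B : ι → Set V}
    (hB : Pairwise fun i j => Disjoint (B i) (B j)) {center : ι → V} {arm : ι → ι → Set V}
    (harm : ∀ i j, M.Adj i j → arm i j ⊆ B i ∩ U ∧ center i ∈ arm i j ∧
      (G.induce (arm i j)).Connected ∧ ∃ u ∈ arm i j, ∃ v ∈ arm j i, G.Adj u v) :
    K.IsMinorModel M fun i => ⋃ j : {j // M.Adj i j}, arm i j := by
  have hsub : ∀ i, (⋃ j : {j // M.Adj i j}, arm i j) ⊆ B i ∩ U :=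
    fun i => Set.iUnion_subset fun j => (harm i j j.2).1
  refine ⟨fun i j hij => (hB hij).mono (fun x hx => (hsub i hx).1) (fun x hx => (hsub j hx).1),
    fun i => ?_, fun i j hij => ?_⟩
  · refine (preconnected_induce_iUnion (fun j : {j // M.Adj i j} => (harm i j j.2).2.2.1)
      (fun j : {j // M.Adj i j} => (harm i j j.2).2.1)).mono fun a b hab => ?_
    exact hGK a (hsub i a.2).2 b (hsub i b.2).2 hab
  · obtain ⟨u, hu, v, hv, huv⟩ := (harm i j hij).2.2.2
    exact ⟨u, Set.mem_iUnion.2 ⟨⟨j, hij⟩, hu⟩, v, Set.mem_iUnion.2 ⟨⟨i, hij.symm⟩, hv⟩,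
      hGK u ((harm i j hij).1 hu).2 v ((harm j i hij.symm).1 hv).2 huv⟩

theorem ncard_edgeSet_le_of_arms [Finite V] [Fintype ι] {G : SimpleGraph V} {U : Set V} {k : ℕ}
    (hU : ∀ κ : (G.induce U).ConnectedComponent,
      ∃ H : SimpleGraph κ.supp, (G.induce U).induce κ.supp ≤ H ∧ IsKTree k H)
    {M : SimpleGraph ι} {B : ι → Set V} (hB : Pairwise fun i j => Disjoint (B i) (B j))
    {center : ι → V} {arm : ι → ι → Set V}
    (harm : ∀ i j, M.Adj i j → arm i j ⊆ B i ∩ U ∧ center i ∈ arm i j ∧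
      (G.induce (arm i j)).Connected ∧ ∃ u ∈ arm i j, ∃ v ∈ arm j i, G.Adj u v) :
    M.edgeSet.ncard ≤ k * Fintype.card ι := by
  have := Fintype.ofFinite V
  obtain ⟨K, hK, hGK⟩ := exists_hasSimplicialElimination_of_forall_isKTree hU
  calc M.edgeSet.ncard ≤ k * _ := (isMinorModel_iUnion hGK hB harm).ncard_edgeSet_le hK
        Finset.univ fun _ _ _ => Finset.mem_coe.2 (Finset.mem_univ _)
    _ ≤ k * Fintype.card ι :=
      Nat.mul_le_mul_left _ ((Set.ncard_le_card _).trans_eq Nat.card_eq_fintype_card)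

theorem exists_ports [LinearOrder ι] [Nonempty V] {G : SimpleGraph V} {Q : SimpleGraph ι}
    {B : ι → Set V} (h : ∀ i j, Q.Adj i j → ∃ u ∈ B i, ∃ v ∈ B j, G.Adj u v) :
    ∃ port : ι → ι → V, ∀ i j, Q.Adj i j → port i j ∈ B i ∧ G.Adj (port i j) (port j i) := by
  choose! u hu v hv huv using h
  refine ⟨fun i j => if i < j then u i j else v j i, fun i j hij => ?_⟩
  rcases lt_trichotomy i j with hlt | rfl | hgt
  · simpa [hlt, hlt.not_gt] using ⟨hu i j hij, huv i j hij⟩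
  · exact absurd hij (Q.loopless.irrefl i)
  · simpa [hgt, hgt.not_gt] using ⟨hv j i hij.symm, (huv j i hij.symm).symm⟩

end SimpleGraph

open SimpleGraph

theorem IsBallFamily.pairwise_disjoint {V : Type*} {G : SimpleGraph V} {r p : ℕ}
    {B : Fin p → Set V} (hB : IsBallFamily G r 1 B) :
    Pairwise fun i j => Disjoint (B i) (B j) := by
  intro i j hij
  refine Set.disjoint_left.2 fun v hvi hvj => ?_
  have hpair : ({i, j} : Set (Fin p)) ⊆ {i' | v ∈ B i'} := by
    rintro _ (rfl | rfl) <;> assumption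
  have := (Set.ncard_pair hij).symm.trans_le ((Set.ncard_le_ncard hpair).trans (hB.2 v))
  omega

theorem IsBallFamily.exists_arms {V : Type*} {G : SimpleGraph V} {r p : ℕ}
    {B : Fin p → Set V} (hB : IsBallFamily G r 1 B) :
    ∃ (center : Fin p → V) (arm : Fin p → Fin p → Set V), ∀ i j, (quotientGraph G B).Adj i j →
      arm i j ⊆ B i ∧ center i ∈ arm i j ∧ (G.induce (arm i j)).Connected ∧
      (arm i j).ncard ≤ r + 1 ∧ ∃ u ∈ arm i j, ∃ v ∈ arm j i, G.Adj u v := by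
  have hdisj := hB.pairwise_disjoint
  choose hconn center hcenter using hB.1
  rcases isEmpty_or_nonempty V with hV | hV
  · exact ⟨fun i => center i, fun _ _ => ∅, fun i _ _ => isEmptyElim (center i).1⟩
  have hpath : ∀ i, ∀ y ∈ B i, ∃ s ⊆ B i, (center i).1 ∈ s ∧ y ∈ s ∧
      (G.induce s).Connected ∧ s.ncard ≤ r + 1 := by
    intro i y hy
    obtain ⟨s, hs, hcs, hys, hsc, hsr⟩ :=
      exists_connected_induce_of_reachable ((hconn i).preconnected (center i) ⟨y, hy⟩)
    exact ⟨s, hs, hcs, hys, hsc, hsr.trans (Nat.add_le_add_right (hcenter i ⟨y, hy⟩) 1)⟩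
  choose! path hpathB hcpath hypath hpathc hpathr using hpath
  obtain ⟨port, hport⟩ := exists_ports (Q := quotientGraph G B) fun i j ⟨hij, h⟩ =>
    h.resolve_left (Set.not_nonempty_iff_eq_empty.2 (hdisj hij).inter_eq)
  refine ⟨fun i => center i, fun i j => path i (port i j), fun i j hij => ?_⟩
  obtain ⟨hpi, hadj⟩ := hport i j hij
  have hpj := (hport j i hij.symm).1
  exact ⟨hpathB _ _ hpi, hcpath _ _ hpi, hpathc _ _ hpi, hpathr _ _ hpi,
    _, hypath _ _ hpi, _, hypath _ _ hpj, hadj⟩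

theorem IsBallFamily.ncard_edgeSet_quotientGraph_le {V : Type*} [Fintype V] {G : SimpleGraph V}
    {r N p : ℕ} {c : V → Fin N}
    (hc : ∀ I : Finset (Fin N), I.card ≤ 2 * r + 2 →
      ∀ κ : (G.induce {v | c v ∈ I}).ConnectedComponent,
        treeWidth ((G.induce {v | c v ∈ I}).induce κ.supp) ≤ I.card - 1)
    {B : Fin p → Set V} (hB : IsBallFamily G r 1 B) :
    (quotientGraph G B).edgeSet.ncard ≤ 2 ^ N * (2 * r + 1) * p := by
  obtain ⟨center, arm, harm⟩ := hB.exists_arms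
  set Q := quotientGraph G B
  let M (I : Finset (Fin N)) : SimpleGraph (Fin p) :=
    fromRel fun i j => Q.Adj i j ∧ c '' (arm i j ∪ arm j i) = I
  let T := Finset.univ.filter fun I : Finset (Fin N) => I.card ≤ 2 * r + 2
  have hcover : Q.edgeSet ⊆ ⋃ I ∈ T, (M I).edgeSet := by
    intro e he
    induction e with | _ i j =>
    replace he : Q.Adj i j := he
    have hfin := Set.toFinite (c '' (arm i j ∪ arm j i))
    have hcard : hfin.toFinset.card ≤ 2 * r + 2 := by
      rw [← Set.ncard_eq_toFinset_card _ hfin]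
      calc (c '' (arm i j ∪ arm j i)).ncard ≤ (arm i j ∪ arm j i).ncard := Set.ncard_image_le
        _ ≤ (arm i j).ncard + (arm j i).ncard := Set.ncard_union_le _ _
        _ ≤ 2 * r + 2 := by linarith [(harm i j he).2.2.2.1, (harm j i he.symm).2.2.2.1]
    have hM : (M hfin.toFinset).Adj i j :=
      (fromRel_adj _ _ _).2 ⟨Q.ne_of_adj he, .inl ⟨he, by simp⟩⟩
    exact Set.mem_biUnion (x := hfin.toFinset) (by simpa [T] using hcard) hM
  have hM : ∀ I ∈ T, (M I).edgeSet.ncard ≤ (2 * r + 1) * p := by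
    intro I hI
    have hIr : I.card ≤ 2 * r + 2 := (Finset.mem_filter.1 hI).2
    refine (ncard_edgeSet_le_of_arms (fun κ => exists_isKTree_of_treeWidth_le (hc I hIr κ))
      hB.pairwise_disjoint (center := center) (arm := arm) fun i j hij => ?_).trans
      (by rw [Fintype.card_fin]; exact Nat.mul_le_mul_right _ (by omega))
    obtain ⟨hQ, hcI⟩ : Q.Adj i j ∧ c '' (arm i j ∪ arm j i) = I := by
      rcases ((fromRel_adj _ _ _).1 hij).2 with h | ⟨hQ, hcI⟩
      · exact h
      · exact ⟨hQ.symm, Set.union_comm (arm i j) _ ▸ hcI⟩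
    obtain ⟨hB', hcenter, hconn, -, hadj⟩ := harm i j hQ
    exact ⟨fun x hx => ⟨hB' hx, hcI.subset ⟨x, .inl hx, rfl⟩⟩, hcenter, hconn, hadj⟩
  calc Q.edgeSet.ncard ≤ (⋃ I ∈ T, (M I).edgeSet).ncard := Set.ncard_le_ncard hcover
    _ ≤ ∑ I ∈ T, (M I).edgeSet.ncard := T.set_ncard_biUnion_le _
    _ ≤ ∑ _I ∈ T, (2 * r + 1) * p := Finset.sum_le_sum hM
    _ ≤ 2 ^ N * ((2 * r + 1) * p) := by
      rw [Finset.sum_const, smul_eq_mul]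
      exact Nat.mul_le_mul_right _ ((Finset.card_filter_le _ _).trans (by simp))
    _ = 2 ^ N * (2 * r + 1) * p := by ring

theorem gradR_le_of_lowTreeWidthColoring {V : Type*} [Fintype V] {G : SimpleGraph V}
    {r N : ℕ} (c : V → Fin N)
    (hc : ∀ I : Finset (Fin N), I.card ≤ 2 * r + 2 →
      ∀ κ : (G.induce {v | c v ∈ I}).ConnectedComponent,
        treeWidth ((G.induce {v | c v ∈ I}).induce κ.supp) ≤ I.card - 1) :
    gradR r G ≤ 2 ^ N * (2 * r + 1) := by
  refine Real.sSup_le ?_ (by positivity)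
  rintro _ ⟨p, B, hB, rfl⟩
  rcases Nat.eq_zero_or_pos p with rfl | hp
  · simp only [Nat.cast_zero, div_zero]
    positivity
  rw [div_le_iff₀ (by exact_mod_cast hp)]
  exact_mod_cast hB.ncard_edgeSet_quotientGraph_le hc

/-- Low tree-width colorings imply bounded expansion. -/
theorem stmt9 (C : GraphClass) (h : HasLowTreeWidthColorings C) :
    HasBoundedExpansion C := by
  choose N hN using h
  refine ⟨fun r => 2 ^ N (2 * r + 2) (by omega) * (2 * r + 1), fun V _ G hG r => ?_⟩
  obtain ⟨c, hc⟩ := hN _ _ V G hG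
  exact gradR_le_of_lowTreeWidthColoring c hc
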